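/- In any metric transportation game with n players, for every outcome σ and optimal egalitarian outcome σ*: d(u,v) ≤ 2·E(σ*) for all players u,v and d(u,t) ≤ E(σ*) for all players u, and consequently E(σ) ≤ (2n−1)·E(σ*). Hence the Sequential Price of Anarchy for E is at most 2n−1. -/

import Mathlib

/-!
Every player's cost is at least her distance to the destination `t`, since the bus has to
carry her there; hence all players lie within `E(σ*)` of `t` and within `2 E(σ*)` of each
other. A route starting at a player visits at most `n` players, so it consists of at most
`n - 1` legs between players, each of length at most `2 E(σ*)`, and a final leg to `t` of
length at most `E(σ*)`.
-/

open Finset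

/-- Length of a bus route that visits the points of `l` in order and then ends at the
destination `t` (the initial segment from the depot is ignored). -/
noncomputable def routeLen {V : Type*} [PseudoMetricSpace V] (t : V) (l : List V) : ℝ :=
  ∑ i ∈ Finset.range l.length, dist (l.getD i t) (l.getD (i + 1) t)

/-- The route of bus `j` under outcome `σ`: the players that chose bus `j`, in the order
given by the fixed permutation list `ord j` of bus `j`. -/
def busRoute {n m : ℕ} (ord : Fin m → List (Fin n)) (σ : Fin n → Fin m) (j : Fin m) :
    List (Fin n) :=
  (ord j).filter (fun i => decide (σ i = j))

/-- `ord` gives, for every bus, a permutation of all the players. -/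
def validOrd {n m : ℕ} (ord : Fin m → List (Fin n)) : Prop :=
  ∀ j : Fin m, (ord j).Nodup ∧ ∀ i : Fin n, i ∈ ord j

/-- The cost of player `i` under outcome `σ`: the distance traveled by `i`'s bus from the
location of `i` to the destination `t`. -/
noncomputable def playerCost {V : Type*} [PseudoMetricSpace V] {n m : ℕ}
    (x : Fin n → V) (t : V) (ord : Fin m → List (Fin n)) (σ : Fin n → Fin m)
    (i : Fin n) : ℝ :=
  routeLen t
    (((busRoute ord σ (σ i)).drop ((busRoute ord σ (σ i)).idxOf i)).map x)

/-- The utilitarian social cost: the sum of the costs of all players. -/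
noncomputable def socialU {V : Type*} [PseudoMetricSpace V] {n m : ℕ}
    (x : Fin n → V) (t : V) (ord : Fin m → List (Fin n)) (σ : Fin n → Fin m) : ℝ :=
  ∑ i : Fin n, playerCost x t ord σ i

/-- The egalitarian social cost: the largest cost of a player. -/
noncomputable def socialE {V : Type*} [PseudoMetricSpace V] {n m : ℕ}
    (x : Fin n → V) (t : V) (ord : Fin m → List (Fin n)) (σ : Fin n → Fin m) : ℝ :=
  ⨆ i : Fin n, playerCost x t ord σ i

/-- `σ` is a (pure) Nash equilibrium: no player can decrease her cost by unilaterally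
switching to another bus. -/
def isNash {V : Type*} [PseudoMetricSpace V] {n m : ℕ}
    (x : Fin n → V) (t : V) (ord : Fin m → List (Fin n)) (σ : Fin n → Fin m) : Prop :=
  ∀ i : Fin n, ∀ j : Fin m,
    playerCost x t ord σ i ≤ playerCost x t ord (Function.update σ i j) i

section Route

variable {V : Type*} [PseudoMetricSpace V] (t : V)

@[simp]
lemma routeLen_nil : routeLen t [] = 0 := by
  simp [routeLen]

lemma routeLen_cons (a : V) (l : List V) :
    routeLen t (a :: l) = dist a (l.getD 0 t) + routeLen t l := by
  rw [routeLen, List.length_cons, Finset.sum_range_succ', add_comm]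
  simp only [List.getD_cons_succ, List.getD_cons_zero, routeLen]

lemma dist_le_routeLen_cons (a : V) (l : List V) : dist a t ≤ routeLen t (a :: l) := by
  induction l generalizing a with
  | nil => simp [routeLen_cons]
  | cons b l ih =>
    rw [routeLen_cons, List.getD_cons_zero]
    linarith [dist_triangle a b t, ih b]

lemma routeLen_cons_le {r : ℝ} (a : V) (l : List V) (hr : ∀ p ∈ a :: l, dist p t ≤ r) :
    routeLen t (a :: l) ≤ (2 * l.length + 1) * r := by
  induction l generalizing a with
  | nil => simpa [routeLen_cons] using hr a (by simp)
  | cons b l ih =>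
    have hab : dist a b ≤ r + r :=
      (dist_triangle_right a b t).trans (add_le_add (hr a (by simp)) (hr b (by simp)))
    have hrest := ih b fun p hp => hr p (List.mem_cons_of_mem a hp)
    rw [routeLen_cons, List.getD_cons_zero, List.length_cons]
    push_cast
    linarith

end Route

section Game

variable {V : Type*} [PseudoMetricSpace V] {n m : ℕ} (x : Fin n → V) (t : V)
  {ord : Fin m → List (Fin n)} (σ : Fin n → Fin m)

lemma mem_busRoute_self (hord : validOrd ord) (i : Fin n) : i ∈ busRoute ord σ (σ i) := by
  simp [busRoute, (hord (σ i)).2 i]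

lemma length_busRoute_le (hord : validOrd ord) (j : Fin m) : (busRoute ord σ j).length ≤ n :=
  (List.length_filter_le _ _).trans <| by
    simpa using (hord j).1.length_le_card

lemma exists_playerCost_eq_routeLen_cons (hord : validOrd ord) (i : Fin n) :
    ∃ l : List (Fin n), l.length + 1 ≤ n ∧
      playerCost x t ord σ i = routeLen t (x i :: l.map x) := by
  set R := busRoute ord σ (σ i)
  have hi : R.idxOf i < R.length := List.idxOf_lt_length_iff.2 (mem_busRoute_self σ hord i)
  refine ⟨R.drop (R.idxOf i + 1), ?_, ?_⟩
  · have : R.length ≤ n := length_busRoute_le σ hord (σ i)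
    rw [List.length_drop]
    omega
  · rw [playerCost, List.drop_eq_getElem_cons hi, List.getElem_idxOf, List.map_cons]

lemma dist_le_playerCost (hord : validOrd ord) (i : Fin n) :
    dist (x i) t ≤ playerCost x t ord σ i := by
  obtain ⟨l, -, hl⟩ := exists_playerCost_eq_routeLen_cons x t σ hord i
  exact hl ▸ dist_le_routeLen_cons t (x i) _

lemma playerCost_le_socialE (i : Fin n) : playerCost x t ord σ i ≤ socialE x t ord σ :=
  le_ciSup (Set.finite_range _).bddAbove i

lemma playerCost_le {r : ℝ} (hord : validOrd ord) (hr : ∀ u, dist (x u) t ≤ r) (i : Fin n) :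
    playerCost x t ord σ i ≤ (2 * n - 1) * r := by
  obtain ⟨l, hln, hl⟩ := exists_playerCost_eq_routeLen_cons x t σ hord i
  have hlen : (2 * (l.map x).length + 1 : ℝ) ≤ 2 * n - 1 := by
    rw [List.length_map]
    have : (l.length : ℝ) + 1 ≤ n := by exact_mod_cast hln
    linarith
  rw [hl]
  refine (routeLen_cons_le t (x i) _ ?_).trans
    (mul_le_mul_of_nonneg_right hlen (dist_nonneg.trans (hr i)))
  simp [hr]

lemma socialE_le [Nonempty (Fin n)] {r : ℝ} (hord : validOrd ord)
    (hr : ∀ u, dist (x u) t ≤ r) : socialE x t ord σ ≤ (2 * n - 1) * r :=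
  ciSup_le (playerCost_le x t σ hord hr)

end Game

theorem stmt11_general {V : Type*} [MetricSpace V] {n m : ℕ} (hn : 1 ≤ n)
    (x : Fin n → V) (t : V) (ord : Fin m → List (Fin n)) (hord : validOrd ord)
    (σ σstar : Fin n → Fin m) :
    (∀ u v : Fin n, dist (x u) (x v) ≤ 2 * socialE x t ord σstar) ∧
    (∀ u : Fin n, dist (x u) t ≤ socialE x t ord σstar) ∧
    socialE x t ord σ ≤ (2 * (n : ℝ) - 1) * socialE x t ord σstar := by
  have : Nonempty (Fin n) := Fin.pos_iff_nonempty.mp hn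
  have hdist_t : ∀ u, dist (x u) t ≤ socialE x t ord σstar := fun u =>
    (dist_le_playerCost x t σstar hord u).trans (playerCost_le_socialE x t σstar u)
  refine ⟨fun u v => ?_, hdist_t, socialE_le x t σ hord hdist_t⟩
  linarith [dist_triangle_right (x u) (x v) t, hdist_t u, hdist_t v]

/-- for every outcome `σ` and optimal egalitarian outcome `σ*`:
`d(u,v) ≤ 2·E(σ*)` for all players `u,v`, `d(u,t) ≤ E(σ*)` for all players `u`, and
consequently `E(σ) ≤ (2n-1)·E(σ*)` (hence `SPoA(E) ≤ 2n-1`). -/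
theorem stmt11 {V : Type*} [MetricSpace V] {n m : ℕ} (hn : 1 ≤ n)
    (x : Fin n → V) (t : V) (ord : Fin m → List (Fin n)) (hord : validOrd ord)
    (σ σstar : Fin n → Fin m)
    (hopt : ∀ σ' : Fin n → Fin m, socialE x t ord σstar ≤ socialE x t ord σ') :
    (∀ u v : Fin n, dist (x u) (x v) ≤ 2 * socialE x t ord σstar) ∧
    (∀ u : Fin n, dist (x u) t ≤ socialE x t ord σstar) ∧
    socialE x t ord σ ≤ (2 * (n : ℝ) - 1) * socialE x t ord σstar :=
  stmt11_general hn x t ord hord σ σstar
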